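/- arXiv:2505.07369 — 3 statements merged into one kernel-verified Lean document; each statement's English description precedes it below -/
import Mathlib

section
/- Every n-dimensional polytope with n+2 vertices is either a pyramid (over a polytope with n+1 vertices in a hyperplane) or a generalized bipyramid: there exist an (n−1)-dimensional polytope B and two vertices v, w lying on strictly opposite sides of the hyperplane aff(B) such that the polytope equals conv([v,w] ∪ B). -/
/-!
If some `n + 1` of the vertices lie on a hyperplane, the remaining vertex is the apex of a pyramid.
Otherwise every `n + 1` of the vertices affinely span `ℝⁿ`. The `n + 2` vertices satisfy a
nontrivial affine relation `∑ aₓ • x = 0`, `∑ aₓ = 0`, and since two distinct points cannot carry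
such a relation alone, two vertices `v ≠ w` have coefficients of the same sign. The other `n`
vertices `B` span a hyperplane `f = c` missing `v` and `w`, and applying `f - c` to the relation
gives `a_v (f v - c) + a_w (f w - c) = 0`: `v` and `w` lie strictly on opposite sides of `aff B`.
-/

open Module Finset

section

variable {k E : Type*} [Field k] [AddCommGroup E] [Module k E]

theorem exists_linearMap_ne_zero_eq_const_of_affineSpan_ne_top {s : Set E} (hs : s.Nonempty)
    (h : affineSpan k s ≠ ⊤) : ∃ f : E →ₗ[k] k, f ≠ 0 ∧ ∃ c, ∀ x ∈ s, f x = c := by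
  rw [Ne, AffineSubspace.affineSpan_eq_top_iff_vectorSpan_eq_top_of_nonempty k E E hs] at h
  obtain ⟨f, hf, hker⟩ := (vectorSpan k s).exists_le_ker_of_lt_top (lt_top_iff_ne_top.2 h)
  obtain ⟨x₀, hx₀⟩ := hs
  refine ⟨f, hf, f x₀, fun x hx => ?_⟩
  simpa [sub_eq_zero] using hker (vsub_mem_vectorSpan k hx hx₀)

theorem affineSpan_ne_top_of_linearMap_eq_const {s : Set E} {f : E →ₗ[k] k} (hf : f ≠ 0) {c : k}
    (h : ∀ x ∈ s, f x = c) : affineSpan k s ≠ ⊤ := by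
  intro htop
  have hker : vectorSpan k s ≤ LinearMap.ker f := by
    rw [vectorSpan_def, Submodule.span_le]
    rintro _ ⟨x, hx, y, hy, rfl⟩
    simp [h x hx, h y hy]
  rw [AffineSubspace.vectorSpan_eq_top_of_affineSpan_eq_top k E E htop, top_le_iff,
    LinearMap.ker_eq_top] at hker
  exact hf hker

theorem exists_linearMap_eq_const_on_erase_of_affineSpan_erase_ne_top [DecidableEq E]
    {V : Finset E} (hV : affineSpan k (V : Set E) = ⊤)
    {v : E} (hne : (V.erase v).Nonempty)
    (h : affineSpan k (V.erase v : Set E) ≠ ⊤) :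
    ∃ (f : E →ₗ[k] k) (c : k), (∀ x ∈ V.erase v, f x = c) ∧ f v ≠ c := by
  obtain ⟨f, hf, c, hc⟩ := exists_linearMap_ne_zero_eq_const_of_affineSpan_ne_top hne h
  refine ⟨f, c, hc, fun hfv => affineSpan_ne_top_of_linearMap_eq_const hf (s := V) (c := c) ?_ hV⟩
  intro x hx
  by_cases hxv : x = v
  · rwa [hxv]
  · exact hc x (mem_erase.2 ⟨hxv, hx⟩)

theorem finrank_vectorSpan_eq_of_card_eq [FiniteDimensional k E] {B : Finset E}
    (hB : B.card = finrank k E) {w : E} (hw : affineSpan k (insert w (B : Set E)) = ⊤) :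
    finrank k (vectorSpan k (B : Set E)) = finrank k E - 1 := by
  classical
  rcases B.eq_empty_or_nonempty with rfl | hBne
  · simp [← hB]
  have hle : finrank k (vectorSpan k (B : Set E)) ≤ finrank k E - 1 := by
    have := finrank_vectorSpan_image_finset_le k id B (n := finrank k E - 1)
      (by have := hBne.card_pos; omega)
    rwa [image_id] at this
  have hge := finrank_vectorSpan_insert_le_set k (B : Set E) w
  rw [AffineSubspace.vectorSpan_eq_top_of_affineSpan_eq_top k E E hw, finrank_top] at hge
  omega

theorem sum_mul_sub_eq_zero_of_affine_relation {t : Finset E} {a : E → k}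
    (hsum : ∑ x ∈ t, a x = 0) (hcomb : ∑ x ∈ t, a x • x = 0) (f : E →ₗ[k] k) (c : k) :
    ∑ x ∈ t, a x * (f x - c) = 0 := by
  have := congrArg f hcomb
  simp only [map_sum, map_smul, smul_eq_mul, map_zero] at this
  simp only [mul_sub, sum_sub_distrib, ← sum_mul, hsum, zero_mul, sub_zero, this]

variable [LinearOrder k] [IsStrictOrderedRing k]

theorem exists_ne_mul_pos_of_affine_relation {t : Finset E} {a : E → k}
    (hsum : ∑ x ∈ t, a x = 0) (hcomb : ∑ x ∈ t, a x • x = 0) {x : E} (hx : x ∈ t)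
    (hax : a x ≠ 0) : ∃ v ∈ t, ∃ w ∈ t, v ≠ w ∧ 0 < a v * a w := by
  classical
  by_contra! hneg
  obtain ⟨y, hy, hay⟩ : ∃ y ∈ t.erase x, a y ≠ 0 := by
    refine exists_ne_zero_of_sum_ne_zero ?_
    rw [sum_erase_eq_sub hx, hsum, zero_sub, neg_ne_zero]
    exact hax
  obtain ⟨hyx, hy⟩ := mem_erase.1 hy
  have hxy : a x * a y < 0 := (hneg x hx y hy (Ne.symm hyx)).lt_of_ne (mul_ne_zero hax hay)
  -- any third coefficient would have a sign opposite to both `a x` and `a y`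
  have hrest : ∀ z ∈ t, z ≠ x ∧ z ≠ y → a z = 0 := by
    rintro z hz ⟨hzx, hzy⟩
    by_contra haz
    have hprod := mul_nonneg_of_nonpos_of_nonpos (hneg z hz x hx hzx) (hneg z hz y hy hzy)
    nlinarith [mul_neg_of_pos_of_neg (pow_pos (abs_pos.2 haz) 2) hxy, sq_abs (a z)]
  have hrest_smul : ∀ z ∈ t, z ≠ x ∧ z ≠ y → a z • z = 0 := fun z hz hzxy => by
    rw [hrest z hz hzxy, zero_smul]
  rw [sum_eq_add_of_mem x y hx hy (Ne.symm hyx) hrest] at hsum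
  rw [sum_eq_add_of_mem x y hx hy (Ne.symm hyx) hrest_smul,
    eq_neg_of_add_eq_zero_right hsum] at hcomb
  have : a x • (x - y) = 0 := by
    linear_combination (norm := module) hcomb
  exact hyx (sub_eq_zero.1 ((smul_eq_zero.1 this).resolve_left hax)).symm

theorem convexHull_insert_insert_eq_convexHull_segment_union (v w : E) (B : Set E) :
    convexHull k (insert v (insert w B)) = convexHull k (segment k v w ∪ B) := by
  rw [← convexHull_pair, convexHull_convexHull_union_left, Set.insert_union, Set.singleton_union]

theorem mul_sub_const_neg_of_affine_relation [DecidableEq E] {V : Finset E} {a : E → k}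
    (hsum : ∑ x ∈ V, a x = 0) (hcomb : ∑ x ∈ V, a x • x = 0) {v w : E} (hv : v ∈ V) (hw : w ∈ V)
    (hvw : v ≠ w) (hpos : 0 < a v * a w) {f : E →ₗ[k] k} {c : k}
    (hc : ∀ x ∈ (V.erase v).erase w, f x = c) (hfv : f v ≠ c) : (f v - c) * (f w - c) < 0 := by
  have hrel : a v * (f v - c) + a w * (f w - c) = 0 := by
    have := sum_mul_sub_eq_zero_of_affine_relation hsum hcomb f c
    rwa [← add_sum_erase _ _ hv, ← add_sum_erase _ _ (mem_erase.2 ⟨hvw.symm, hw⟩),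
      sum_eq_zero (fun x hx => by rw [hc x hx, sub_self, mul_zero]), add_zero] at this
  have hv0 : a v * (f v - c) ≠ 0 := mul_ne_zero (left_ne_zero_of_mul hpos.ne') (sub_ne_zero.2 hfv)
  -- multiplying by `a v * a w > 0` turns the product into `-(a v * (f v - c))²`
  have : a v * a w * ((f v - c) * (f w - c)) = -(a v * (f v - c)) ^ 2 := by
    linear_combination (a v * (f v - c)) * hrel
  exact neg_of_mul_neg_right (this ▸ neg_neg_of_pos (by positivity)) hpos.le

theorem exists_bipyramid_of_forall_affineSpan_erase_eq_top [FiniteDimensional k E]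
    [DecidableEq E] {V : Finset E} (hcard : V.card = finrank k E + 2)
    (hfacet : ∀ v ∈ V, affineSpan k (V.erase v : Set E) = ⊤) :
    ∃ v ∈ V, ∃ w ∈ V, v ≠ w ∧ ∃ (B : Finset E) (f : E →ₗ[k] k) (c : k),
      (∀ x ∈ B, f x = c) ∧ f v < c ∧ c < f w ∧
      finrank k (affineSpan k (B : Set E)).direction = finrank k E - 1 ∧
      convexHull k (V : Set E) = convexHull k (segment k v w ∪ (B : Set E)) := by
  obtain ⟨a, hcomb, hsum, x, hx, hax⟩ :=
    exists_nontrivial_relation_sum_zero_of_finrank_succ_lt_card (R := k) (t := V) (by omega)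
  obtain ⟨v, hv, w, hw, hvw, hpos⟩ := exists_ne_mul_pos_of_affine_relation hsum hcomb hx hax
  set B := (V.erase v).erase w
  have hwv : w ∈ V.erase v := mem_erase.2 ⟨hvw.symm, hw⟩
  have hVv : V.erase v = insert w B := (insert_erase hwv).symm
  have hVw : V.erase w = insert v B := by
    rw [show B = (V.erase w).erase v from erase_right_comm, insert_erase (mem_erase.2 ⟨hvw, hv⟩)]
  have hBcard : B.card = finrank k E := by
    rw [card_erase_of_mem hwv, card_erase_of_mem hv, hcard]; rfl
  have hdim : finrank k (vectorSpan k (B : Set E)) = finrank k E - 1 :=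
    finrank_vectorSpan_eq_of_card_eq hBcard (by rw [← coe_insert, ← hVv]; exact hfacet v hv)
  have hE : 0 < finrank k E := by
    by_contra! h
    have : Subsingleton E := (finrank_zero_iff (R := k)).1 (by omega)
    have := V.card_le_one_of_subsingleton
    omega
  have hB : affineSpan k (B : Set E) ≠ ⊤ := fun htop => by
    rw [AffineSubspace.vectorSpan_eq_top_of_affineSpan_eq_top k E E htop, finrank_top] at hdim
    omega
  obtain ⟨f, hf, c, hc⟩ := exists_linearMap_ne_zero_eq_const_of_affineSpan_ne_top
    (by exact_mod_cast card_pos.1 (hBcard ▸ hE)) hB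
  have hfv : f v ≠ c := fun hfv => affineSpan_ne_top_of_linearMap_eq_const hf
    (s := insert v (B : Set E)) ((Set.forall_mem_insert ..).2 ⟨hfv, hc⟩)
    (by rw [← coe_insert, ← hVw]; exact hfacet w hw)
  have hsign := mul_sub_const_neg_of_affine_relation hsum hcomb hv hw hvw hpos hc hfv
  have hhull : convexHull k (V : Set E) = convexHull k (segment k v w ∪ (B : Set E)) := by
    rw [← insert_erase hv, hVv, coe_insert, coe_insert,
      convexHull_insert_insert_eq_convexHull_segment_union]
  rw [← direction_affineSpan] at hdim
  rcases hfv.lt_or_gt with hlt | hgt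
  · exact ⟨v, hv, w, hw, hvw, B, f, c, hc, hlt, by nlinarith, hdim, hhull⟩
  · exact ⟨w, hw, v, hv, hvw.symm, B, f, c, hc, by nlinarith, hgt, hdim,
      by rw [hhull, segment_symm]⟩

end

theorem stmt6_general (n : ℕ) (V : Finset (Fin n → ℝ)) (hcard : V.card = n + 2)
    (hint : (interior (convexHull ℝ (↑V : Set (Fin n → ℝ)))).Nonempty) :
    -- P is a pyramid: all vertices but one lie on a hyperplane missing the apex
    (∃ v ∈ V, ∃ (f : (Fin n → ℝ) →ₗ[ℝ] ℝ) (c : ℝ),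
        (∀ x ∈ V.erase v, f x = c) ∧ f v ≠ c) ∨
    -- or P is a generalized bipyramid over an (n-1)-dimensional base B
    (∃ v ∈ V, ∃ w ∈ V, v ≠ w ∧ ∃ (B : Finset (Fin n → ℝ))
        (f : (Fin n → ℝ) →ₗ[ℝ] ℝ) (c : ℝ),
        (∀ x ∈ B, f x = c) ∧ f v < c ∧ c < f w ∧
        Module.finrank ℝ (affineSpan ℝ (↑B : Set (Fin n → ℝ))).direction = n - 1 ∧
        convexHull ℝ (↑V : Set (Fin n → ℝ)) =
          convexHull ℝ (segment ℝ v w ∪ (↑B : Set (Fin n → ℝ)))) := by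
  have hspan : affineSpan ℝ (V : Set (Fin n → ℝ)) = ⊤ := by
    rw [← affineSpan_convexHull]
    exact (convex_convexHull ℝ _).interior_nonempty_iff_affineSpan_eq_top.1 hint
  by_cases hpyr : ∃ v ∈ V, affineSpan ℝ (V.erase v : Set (Fin n → ℝ)) ≠ ⊤
  · obtain ⟨v, hv, hv_span⟩ := hpyr
    have hne : (V.erase v).Nonempty := by
      rw [← card_pos, card_erase_of_mem hv, hcard]; omega
    exact Or.inl
      ⟨v, hv, exists_linearMap_eq_const_on_erase_of_affineSpan_erase_ne_top hspan hne hv_span⟩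
  · push Not at hpyr
    have := exists_bipyramid_of_forall_affineSpan_erase_eq_top (k := ℝ)
      (by rwa [finrank_fin_fun]) hpyr
    rw [finrank_fin_fun] at this
    exact Or.inr this

theorem stmt6 (n : ℕ) (hn : 2 ≤ n) (V : Finset (Fin n → ℝ)) (hcard : V.card = n + 2)
    (hvert : ∀ v ∈ V, v ∉ convexHull ℝ (↑(V.erase v) : Set (Fin n → ℝ)))
    (hint : (interior (convexHull ℝ (↑V : Set (Fin n → ℝ)))).Nonempty) :
    -- P is a pyramid: all vertices but one lie on a hyperplane missing the apex
    (∃ v ∈ V, ∃ (f : (Fin n → ℝ) →ₗ[ℝ] ℝ) (c : ℝ),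
        (∀ x ∈ V.erase v, f x = c) ∧ f v ≠ c) ∨
    -- or P is a generalized bipyramid over an (n-1)-dimensional base B
    (∃ v ∈ V, ∃ w ∈ V, v ≠ w ∧ ∃ (B : Finset (Fin n → ℝ))
        (f : (Fin n → ℝ) →ₗ[ℝ] ℝ) (c : ℝ),
        (∀ x ∈ B, f x = c) ∧ f v < c ∧ c < f w ∧
        Module.finrank ℝ (affineSpan ℝ (↑B : Set (Fin n → ℝ))).direction = n - 1 ∧
        convexHull ℝ (↑V : Set (Fin n → ℝ)) =
          convexHull ℝ (segment ℝ v w ∪ (↑B : Set (Fin n → ℝ)))) :=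
  stmt6_general n V hcard hint
end

section
/- Let P' ⊆ {x ∈ ℝ^n : x_n = ξ} with 0 ≤ ξ ≤ 1 be an (n−1)-dimensional convex body, and let P = conv(P' ∪ {0, e_n}) where e_n = (0,…,0,1). Then the cylinder C = (1 − 1/n)·P' + [0, (1/n)·e_n] is contained in P. -/
open Pointwise

/-- In `ℝ^{n+1}`: if `P'` is an `n`-dimensional convex body in the hyperplane `{x_{n+1} = ξ}`
with `0 ≤ ξ ≤ 1`, and `P = conv(P' ∪ {0, e_{n+1}})`, then the cylinder
`(1 - 1/(n+1))·P' + [0, (1/(n+1))·e_{n+1}]` is contained in `P`. -/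
theorem stmt8 (n : ℕ) (ξ : ℝ) (hξ0 : 0 ≤ ξ) (hξ1 : ξ ≤ 1)
    (P' : Set (Fin (n + 1) → ℝ))
    (hsub : ∀ x ∈ P', x (Fin.last n) = ξ)
    (hconv : Convex ℝ P') (hcomp : IsCompact P')
    (hdim : Module.finrank ℝ (affineSpan ℝ P').direction = n) :
    (1 - 1 / ((n : ℝ) + 1)) • P' +
        segment ℝ 0 ((1 / ((n : ℝ) + 1)) • (Pi.single (Fin.last n) 1 : Fin (n + 1) → ℝ)) ⊆
      convexHull ℝ (P' ∪ {0, (Pi.single (Fin.last n) 1 : Fin (n + 1) → ℝ)}) := by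
  set e : Fin (n + 1) → ℝ := Pi.single (Fin.last n) 1 with he
  set lam : ℝ := 1 / ((n : ℝ) + 1) with hlam
  have hn : (0 : ℝ) < (n : ℝ) + 1 := by positivity
  have hlam0 : 0 ≤ lam := by positivity
  have hlam1 : lam ≤ 1 := by
    rw [hlam, div_le_one hn]; linarith [Nat.cast_nonneg (α := ℝ) n]
  set C := convexHull ℝ (P' ∪ {0, e}) with hC
  have hCconv : Convex ℝ C := convex_convexHull ℝ _
  have h0 : (0 : Fin (n + 1) → ℝ) ∈ C :=
    subset_convexHull ℝ _ (Or.inr (by simp))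
  have hem : e ∈ C := subset_convexHull ℝ _ (Or.inr (by simp))
  rintro x hx
  obtain ⟨a, ha, b, hb, rfl⟩ := hx
  obtain ⟨p, hp, rfl⟩ := ha
  rw [segment_eq_image] at hb
  obtain ⟨t, ht, rfl⟩ := hb
  simp only [Set.mem_Icc] at ht
  have hpC : p ∈ C := subset_convexHull ℝ _ (Or.inl hp)
  have hte : t • e ∈ C := by
    have := hCconv h0 hem (by linarith [ht.2] : (0:ℝ) ≤ 1 - t) ht.1 (by ring)
    simpa using this
  have := hCconv hpC hte (by linarith : (0:ℝ) ≤ 1 - lam) hlam0 (by ring)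
  convert this using 2
  simp [smul_smul, mul_comm]
end

section
/- If the segment [v,w] intersects the affine hull of an (n−1)-dimensional polytope B, with v and w on opposite closed sides of aff(B), then conv([v,w] ∪ B) = conv({v} ∪ B') ∪ conv({w} ∪ B') where B' = conv(B ∪ ([v,w] ∩ aff(B))); in particular, the generalized bipyramid splits into two pyramids over the common base B'. -/
/-!
Fix a point `m` of `[v, w]` on the hyperplane. Since the convex hull of a segment and a set is
the join of the segment with the hull of the set, and `[v, w] = [v, m] ∪ [m, w]`, the bipyramid
is `conv([v, m] ∪ B) ∪ conv([m, w] ∪ B)` (a triangle is the union of the two triangles cut off by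
a cevian). As `m` lies in the common base `B'`, these pieces lie in the pyramids over `B'` with
apexes `v` and `w`, and both pyramids lie in the bipyramid.
-/

open Set AffineMap

section
variable {𝕜 E : Type*} [Field 𝕜] [LinearOrder 𝕜] [IsStrictOrderedRing 𝕜] [AddCommGroup E]
  [Module 𝕜 E] {x y m : E}

theorem segment_eq_segment_union_segment (hm : m ∈ segment 𝕜 x y) :
    segment 𝕜 x y = segment 𝕜 x m ∪ segment 𝕜 m y := by
  rw [segment_eq_image_lineMap] at hm ⊢
  obtain ⟨t, ⟨ht₀, ht₁⟩, rfl⟩ := hm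
  rw [← Icc_union_Icc_eq_Icc ht₀ ht₁, image_union, ← segment_eq_Icc ht₀, ← segment_eq_Icc ht₁,
    image_segment, image_segment, lineMap_apply_zero, lineMap_apply_one]

theorem convexHull_segment_union_eq_union (hm : m ∈ segment 𝕜 x y) (s : Set E) :
    convexHull 𝕜 (segment 𝕜 x y ∪ s) =
      convexHull 𝕜 (segment 𝕜 x m ∪ s) ∪ convexHull 𝕜 (segment 𝕜 m y ∪ s) := by
  have hxm : segment 𝕜 x m ⊆ segment 𝕜 x y :=
    (convex_segment x y).segment_subset (left_mem_segment 𝕜 x y) hm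
  have hmy : segment 𝕜 m y ⊆ segment 𝕜 x y :=
    (convex_segment x y).segment_subset hm (right_mem_segment 𝕜 x y)
  refine subset_antisymm ?_ (union_subset (convexHull_mono (union_subset_union_left s hxm))
    (convexHull_mono (union_subset_union_left s hmy)))
  -- adding `m` to `s` makes the hull a join with a nonempty set, even when `s = ∅`
  have hs : ∀ a b, m ∈ segment 𝕜 a b → segment 𝕜 a b ∪ s = segment 𝕜 a b ∪ insert m s :=
    fun a b h => by rw [union_insert, insert_eq_of_mem (mem_union_left s h)]
  rw [hs x y hm, hs x m (right_mem_segment 𝕜 x m), hs m y (left_mem_segment 𝕜 m y),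
    convexHull_union ⟨x, left_mem_segment 𝕜 x y⟩ (insert_nonempty m s),
    (convex_segment x y).convexHull_eq, segment_eq_segment_union_segment hm, convexJoin_union_left]
  exact union_subset_union
    ((convexJoin_subset_convexHull _ _).trans (convexHull_convexHull_union_right _ _).subset)
    ((convexJoin_subset_convexHull _ _).trans (convexHull_convexHull_union_right _ _).subset)

theorem convexHull_segment_union_eq_union_pyramids {s t : Set E} (hm : m ∈ segment 𝕜 x y)
    (hmt : m ∈ t) (hst : s ⊆ t) (hts : t ⊆ convexHull 𝕜 (segment 𝕜 x y ∪ s)) :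
    convexHull 𝕜 (segment 𝕜 x y ∪ s) =
      convexHull 𝕜 ({x} ∪ convexHull 𝕜 t) ∪ convexHull 𝕜 ({y} ∪ convexHull 𝕜 t) := by
  have pyramid_subset : ∀ a ∈ segment 𝕜 x y,
      convexHull 𝕜 ({a} ∪ convexHull 𝕜 t) ⊆ convexHull 𝕜 (segment 𝕜 x y ∪ s) := fun a ha =>
    convexHull_min (union_subset (singleton_subset_iff.2 (subset_convexHull 𝕜 _ (Or.inl ha)))
      (convexHull_min hts (convex_convexHull 𝕜 _))) (convex_convexHull 𝕜 _)
  have subset_pyramid : ∀ a, ∀ b ∈ t,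
      convexHull 𝕜 (segment 𝕜 a b ∪ s) ⊆ convexHull 𝕜 ({a} ∪ convexHull 𝕜 t) := by
    intro a b hb
    have ht : t ⊆ convexHull 𝕜 ({a} ∪ convexHull 𝕜 t) :=
      (subset_convexHull 𝕜 t).trans (subset_union_right.trans (subset_convexHull 𝕜 _))
    refine convexHull_min (union_subset ?_ (hst.trans ht)) (convex_convexHull 𝕜 _)
    exact (convex_convexHull 𝕜 _).segment_subset (subset_convexHull 𝕜 _ (Or.inl rfl)) (ht hb)
  refine subset_antisymm ?_ (union_subset (pyramid_subset x (left_mem_segment 𝕜 x y))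
    (pyramid_subset y (right_mem_segment 𝕜 x y)))
  rw [convexHull_segment_union_eq_union hm s, segment_symm 𝕜 m y]
  exact union_subset_union (subset_pyramid x m hmt) (subset_pyramid y m hmt)

end

theorem stmt12_general (n : ℕ) (B : Finset (Fin n → ℝ))
    (f : (Fin n → ℝ) →ₗ[ℝ] ℝ) (c : ℝ)
    (v w : Fin n → ℝ)
    (hmeet : (segment ℝ v w ∩ {x | f x = c}).Nonempty) :
    convexHull ℝ (segment ℝ v w ∪ (↑B : Set (Fin n → ℝ))) =
      convexHull ℝ ({v} ∪
          convexHull ℝ ((↑B : Set (Fin n → ℝ)) ∪ (segment ℝ v w ∩ {x | f x = c}))) ∪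
        convexHull ℝ ({w} ∪
          convexHull ℝ ((↑B : Set (Fin n → ℝ)) ∪ (segment ℝ v w ∩ {x | f x = c}))) := by
  obtain ⟨m, hm⟩ := hmeet
  refine convexHull_segment_union_eq_union_pyramids hm.1 (Or.inr hm) subset_union_left ?_
  exact union_subset (subset_union_right.trans (subset_convexHull ℝ _))
    (inter_subset_left.trans (subset_union_left.trans (subset_convexHull ℝ _)))

/-- A generalized bipyramid splits into two pyramids over the common base
`B' = conv(B ∪ ([v,w] ∩ aff B))`. -/
theorem stmt12 (n : ℕ) (B : Finset (Fin n → ℝ))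
    (f : (Fin n → ℝ) →ₗ[ℝ] ℝ) (c : ℝ) (hf : f ≠ 0)
    (hB : ∀ x ∈ B, f x = c)
    (hBdim : Module.finrank ℝ (affineSpan ℝ (↑B : Set (Fin n → ℝ))).direction = n - 1)
    (hBaff : (affineSpan ℝ (↑B : Set (Fin n → ℝ)) : Set (Fin n → ℝ)) = {x | f x = c})
    (v w : Fin n → ℝ) (hv : f v ≤ c) (hw : c ≤ f w)
    (hmeet : (segment ℝ v w ∩ {x | f x = c}).Nonempty) :
    convexHull ℝ (segment ℝ v w ∪ (↑B : Set (Fin n → ℝ))) =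
      convexHull ℝ ({v} ∪
          convexHull ℝ ((↑B : Set (Fin n → ℝ)) ∪ (segment ℝ v w ∩ {x | f x = c}))) ∪
        convexHull ℝ ({w} ∪
          convexHull ℝ ((↑B : Set (Fin n → ℝ)) ∪ (segment ℝ v w ∩ {x | f x = c}))) :=
  stmt12_general n B f c v w hmeet
end
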